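/- arXiv:1405.7254 — 3 statements merged into one kernel-verified Lean document; each statement's English description precedes it below -/
import Mathlib

section
/- For every iteration index i ≥ 0, every solar state z, every channel state x, and every battery level y with 1 ≤ y ≤ N_B−1, the value-iteration functions are monotone in the battery level: V_i(z,x,y−1) ≤ V_i(z,x,y); moreover, for every action a ∈ {0,1} with a ≤ y−1, V_i^a(z,x,y−1) ≤ V_i^a(z,x,y). -/
/-!
On-off energy-harvesting MDP value iteration.
`Va` is the action-value update operator, `Viter i` is the `i`-th value-iteration
function `V_i`, and `VIa i a` is the action-value function `V_i^a`.
-/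

/-- The one-step action-value operator:
`Va NB aH pC pQ r lam V a z x y = a·r(x) + λ·Σ_j Σ_l Σ'_q aH(z,j)·pC(x,l)·pQ(z,q)·
V(j, l, min{N_B−1, y−a+q})`. -/
noncomputable def Va {NH NC : ℕ} (NB : ℕ) (aH : Fin NH → Fin NH → ℝ)
    (pC : Fin NC → Fin NC → ℝ) (pQ : Fin NH → ℕ → ℝ) (r : Fin NC → ℝ) (lam : ℝ)
    (V : Fin NH → Fin NC → ℕ → ℝ) (a : ℕ) (z : Fin NH) (x : Fin NC) (y : ℕ) : ℝ :=
  a * r x + lam * ∑ j : Fin NH, ∑ l : Fin NC,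
    ∑' q : ℕ, aH z j * pC x l * pQ z q * V j l (min (NB - 1) (y - a + q))

/-- Value iteration: `V_0 = 0` and `V_{i+1}(z,x,y) = max_{0 ≤ a ≤ min{y,1}} V_{i+1}^a(z,x,y)`. -/
noncomputable def Viter {NH NC : ℕ} (NB : ℕ) (aH : Fin NH → Fin NH → ℝ)
    (pC : Fin NC → Fin NC → ℝ) (pQ : Fin NH → ℕ → ℝ) (r : Fin NC → ℝ) (lam : ℝ) :
    ℕ → Fin NH → Fin NC → ℕ → ℝ
  | 0 => fun _ _ _ => 0
  | (i + 1) => fun z x y =>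
      (Finset.range (min y 1 + 1)).sup' ⟨0, Finset.mem_range.mpr (Nat.succ_pos _)⟩
        (fun a => Va NB aH pC pQ r lam (Viter NB aH pC pQ r lam i) a z x y)

/-- Action-value iteration: `V_0^a = 0` and `V_{i+1}^a = Va applied to V_i`. -/
noncomputable def VIa {NH NC : ℕ} (NB : ℕ) (aH : Fin NH → Fin NH → ℝ)
    (pC : Fin NC → Fin NC → ℝ) (pQ : Fin NH → ℕ → ℝ) (r : Fin NC → ℝ) (lam : ℝ) :
    ℕ → ℕ → Fin NH → Fin NC → ℕ → ℝ
  | 0 => fun _ _ _ _ => 0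
  | (i + 1) => fun a z x y => Va NB aH pC pQ r lam (Viter NB aH pC pQ r lam i) a z x y

section

variable {NH NC : ℕ} {NB : ℕ} {aH : Fin NH → Fin NH → ℝ} {pC : Fin NC → Fin NC → ℝ}
  {pQ : Fin NH → ℕ → ℝ} {r : Fin NC → ℝ} {lam : ℝ}

lemma summable_mul_comp_min_of_monotone {p f : ℕ → ℝ} (hp0 : ∀ q, 0 ≤ p q) (hp : Summable p)
    (hf : Monotone f) (N : ℕ) (t : ℕ → ℕ) :
    Summable fun q => p q * f (min N (t q)) := by
  refine (hp.mul_left (max |f 0| |f N|)).of_norm_bounded fun q => ?_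
  have hbound : |f (min N (t q))| ≤ max |f 0| |f N| :=
    abs_le_max_abs_abs (hf (Nat.zero_le _)) (hf (min_le_left _ _))
  rw [Real.norm_eq_abs, abs_mul, abs_of_nonneg (hp0 q), mul_comm]
  exact mul_le_mul_of_nonneg_right hbound (hp0 q)

lemma Va_monotone (haH : ∀ z j, 0 ≤ aH z j) (hpC : ∀ x l, 0 ≤ pC x l)
    (hpQ : ∀ z q, 0 ≤ pQ z q) (hpQsummable : ∀ z, Summable (pQ z)) (hlam0 : 0 ≤ lam)
    {V : Fin NH → Fin NC → ℕ → ℝ} (hV : ∀ j l, Monotone (V j l)) (a : ℕ) (z : Fin NH)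
    (x : Fin NC) : Monotone (Va NB aH pC pQ r lam V a z x) := by
  intro y y' hy
  unfold Va
  gcongr with j _ l _ q
  case hf | hg =>
    simpa only [mul_assoc] using (summable_mul_comp_min_of_monotone (hpQ z) (hpQsummable z)
      (hV j l) (NB - 1) _).mul_left (aH z j * pC x l)
  case ha => exact mul_nonneg (mul_nonneg (haH z j) (hpC x l)) (hpQ z q)
  case hbc => exact hV j l (min_le_min_left _ (by omega))

lemma Viter_monotone (haH : ∀ z j, 0 ≤ aH z j) (hpC : ∀ x l, 0 ≤ pC x l)
    (hpQ : ∀ z q, 0 ≤ pQ z q) (hpQsummable : ∀ z, Summable (pQ z)) (hlam0 : 0 ≤ lam)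
    (i : ℕ) (z : Fin NH) (x : Fin NC) : Monotone (Viter NB aH pC pQ r lam i z x) := by
  induction i generalizing z x with
  | zero => exact monotone_const
  | succ i ih =>
    intro y y' hy
    have hVa := Va_monotone (NB := NB) (r := r) haH hpC hpQ hpQsummable hlam0 ih
    -- at a higher battery level every action is worth more, and more actions are feasible
    calc Viter NB aH pC pQ r lam (i + 1) z x y
        ≤ (Finset.range (min y 1 + 1)).sup' Finset.nonempty_range_add_one
            (fun a => Va NB aH pC pQ r lam (Viter NB aH pC pQ r lam i) a z x y') :=
          Finset.sup'_mono_fun fun a _ => hVa a z x hy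
      _ ≤ Viter NB aH pC pQ r lam (i + 1) z x y' :=
          Finset.sup'_mono _ (Finset.range_subset_range.2 (by omega)) _

lemma VIa_monotone (haH : ∀ z j, 0 ≤ aH z j) (hpC : ∀ x l, 0 ≤ pC x l)
    (hpQ : ∀ z q, 0 ≤ pQ z q) (hpQsummable : ∀ z, Summable (pQ z)) (hlam0 : 0 ≤ lam)
    (i a : ℕ) (z : Fin NH) (x : Fin NC) : Monotone (VIa NB aH pC pQ r lam i a z x) := by
  cases i with
  | zero => exact monotone_const
  | succ i =>
    exact Va_monotone haH hpC hpQ hpQsummable hlam0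
      (Viter_monotone haH hpC hpQ hpQsummable hlam0 i) a z x

end

theorem viter_monotone_in_battery_general {NH NC : ℕ} (NB : ℕ)
    (aH : Fin NH → Fin NH → ℝ) (pC : Fin NC → Fin NC → ℝ)
    (pQ : Fin NH → ℕ → ℝ) (r : Fin NC → ℝ) (lam : ℝ)
    (haH : ∀ z j, 0 ≤ aH z j)
    (hpC : ∀ x l, 0 ≤ pC x l)
    (hpQ : ∀ z q, 0 ≤ pQ z q) (hpQsummable : ∀ z, Summable (pQ z))
    (hlam0 : 0 ≤ lam)
    (i : ℕ) (z : Fin NH) (x : Fin NC) (y : ℕ) :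
    Viter NB aH pC pQ r lam i z x (y - 1) ≤ Viter NB aH pC pQ r lam i z x y ∧
      ∀ a : ℕ, a ≤ 1 → a ≤ y - 1 →
        VIa NB aH pC pQ r lam i a z x (y - 1) ≤ VIa NB aH pC pQ r lam i a z x y :=
  ⟨Viter_monotone haH hpC hpQ hpQsummable hlam0 i z x (Nat.sub_le y 1),
    fun a _ _ => VIa_monotone haH hpC hpQ hpQsummable hlam0 i a z x (Nat.sub_le y 1)⟩

/-- Lemma 1: for every iteration index `i`, the value-iteration
functions are monotone in the battery level, and so are the action-value functions
for every feasible action `a ∈ {0,1}` with `a ≤ y − 1`. -/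
theorem viter_monotone_in_battery {NH NC : ℕ} (NB : ℕ)
    (hNH : 1 ≤ NH) (hNC : 1 ≤ NC) (hNB : 2 ≤ NB)
    (aH : Fin NH → Fin NH → ℝ) (pC : Fin NC → Fin NC → ℝ)
    (pQ : Fin NH → ℕ → ℝ) (r : Fin NC → ℝ) (lam : ℝ)
    (haH : ∀ z j, 0 ≤ aH z j) (haHsum : ∀ z, ∑ j, aH z j = 1)
    (hpC : ∀ x l, 0 ≤ pC x l) (hpCsum : ∀ x, ∑ l, pC x l = 1)
    (hpQ : ∀ z q, 0 ≤ pQ z q) (hpQsummable : ∀ z, Summable (pQ z))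
    (hpQsum : ∀ z, ∑' q, pQ z q = 1)
    (hr : ∀ x, 0 ≤ r x) (hlam0 : 0 ≤ lam) (hlam1 : lam ≤ 1)
    (i : ℕ) (z : Fin NH) (x : Fin NC) (y : ℕ) (hy1 : 1 ≤ y) (hy2 : y ≤ NB - 1) :
    Viter NB aH pC pQ r lam i z x (y - 1) ≤ Viter NB aH pC pQ r lam i z x y ∧
      ∀ a : ℕ, a ≤ 1 → a ≤ y - 1 →
        VIa NB aH pC pQ r lam i a z x (y - 1) ≤ VIa NB aH pC pQ r lam i a z x y :=
  viter_monotone_in_battery_general NB aH pC pQ r lam haH hpC hpQ hpQsummable hlam0 i z x y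
end

section
/- Suppose κ is an optimal threshold policy for the Bellman fixed point V*, i.e. for every (z,x): V*^1(z,x,y) ≤ V*^0(z,x,y) for all 1 ≤ y ≤ κ(z,x) and V*^1(z,x,y) ≥ V*^0(z,x,y) for all κ(z,x)+1 ≤ y ≤ N_B−1. Then for every solar state z and channel state x with 1 ≤ κ(z,x) ≤ N_B−2, the following two inequalities hold: r(x) ≤ λ·( pQ(z,0)·Ξ(z,x,κ(z,x)−1) + pQ(z,1)·Ξ(z,x,κ(z,x)) ) and r(x) ≥ λ·( pQ(z,0)·Ξ(z,x,κ(z,x)) + pQ(z,1)·Ξ(z,x,κ(z,x)+1) ). -/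
/-!
Both inequalities come from one identity: for `y ≥ 1`, the advantage of transmitting,
`V*^1(z,x,y) − V*^0(z,x,y)`, equals `r(x) − λ·(pQ(z,0)·Ξ(z,x,y−1) + pQ(z,1)·Ξ(z,x,y))`,
since transmitting shifts the next battery level down by one. Evaluating it at the last
idle level `y = κ` (where the advantage is `≤ 0`) and at the first transmitting level
`y = κ + 1` (where it is `≥ 0`) gives the two inequalities.
-/

/-- The action-value associated with a value function `Vstar`:
`V*^a(z,x,y) = a·r(x) + λ·Σ_j Σ_l Σ_{q∈{0,1}} aH(z,j)·pC(x,l)·pQ(z,q)·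
V*(j,l,min{N_B−1,y−a+q})`. -/
noncomputable def VstarA {NH NC : ℕ} (NB : ℕ) (aH : Fin NH → Fin NH → ℝ)
    (pC : Fin NC → Fin NC → ℝ) (pQ : Fin NH → ℕ → ℝ) (r : Fin NC → ℝ) (lam : ℝ)
    (Vstar : Fin NH → Fin NC → ℕ → ℝ) (a : ℕ) (z : Fin NH) (x : Fin NC) (y : ℕ) : ℝ :=
  a * r x + lam * ∑ j : Fin NH, ∑ l : Fin NC, ∑ q ∈ Finset.range 2,
    aH z j * pC x l * pQ z q * Vstar j l (min (NB - 1) (y - a + q))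

/-- `Ξ(z,x,y) = Σ_j Σ_l aH(z,j)·pC(x,l)·( V*(j,l,min{N_B−1,y+1}) − V*(j,l,min{N_B−1,y}) )`. -/
noncomputable def Xi {NH NC : ℕ} (NB : ℕ) (aH : Fin NH → Fin NH → ℝ)
    (pC : Fin NC → Fin NC → ℝ) (Vstar : Fin NH → Fin NC → ℕ → ℝ)
    (z : Fin NH) (x : Fin NC) (y : ℕ) : ℝ :=
  ∑ j : Fin NH, ∑ l : Fin NC, aH z j * pC x l *
    (Vstar j l (min (NB - 1) (y + 1)) - Vstar j l (min (NB - 1) y))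

open Finset

section BellmanAlgebra

variable {NH NC : ℕ} (NB : ℕ) (aH : Fin NH → Fin NH → ℝ) (pC : Fin NC → Fin NC → ℝ)
  (Vstar : Fin NH → Fin NC → ℕ → ℝ)

noncomputable def expectedNextValue (z : Fin NH) (x : Fin NC) (w : ℕ) : ℝ :=
  ∑ j : Fin NH, ∑ l : Fin NC, aH z j * pC x l * Vstar j l (min (NB - 1) w)

theorem Xi_eq_expectedNextValue_sub (z : Fin NH) (x : Fin NC) (y : ℕ) :
    Xi NB aH pC Vstar z x y =
      expectedNextValue NB aH pC Vstar z x (y + 1) - expectedNextValue NB aH pC Vstar z x y := by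
  simp only [Xi, expectedNextValue, mul_sub, sum_sub_distrib]

theorem VstarA_eq_expectedNextValue (pQ : Fin NH → ℕ → ℝ) (r : Fin NC → ℝ) (lam : ℝ)
    (a : ℕ) (z : Fin NH) (x : Fin NC) (y : ℕ) :
    VstarA NB aH pC pQ r lam Vstar a z x y =
      a * r x + lam * (pQ z 0 * expectedNextValue NB aH pC Vstar z x (y - a) +
        pQ z 1 * expectedNextValue NB aH pC Vstar z x (y - a + 1)) := by
  simp only [VstarA, expectedNextValue, sum_range_succ, range_zero, sum_empty, zero_add,
    add_zero, mul_sum, ← sum_add_distrib]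
  congr 1
  refine sum_congr rfl fun j _ => sum_congr rfl fun l _ => ?_
  ring

theorem VstarA_one_sub_VstarA_zero (pQ : Fin NH → ℕ → ℝ) (r : Fin NC → ℝ) (lam : ℝ)
    (z : Fin NH) (x : Fin NC) {y : ℕ} (hy : 1 ≤ y) :
    VstarA NB aH pC pQ r lam Vstar 1 z x y - VstarA NB aH pC pQ r lam Vstar 0 z x y =
      r x - lam * (pQ z 0 * Xi NB aH pC Vstar z x (y - 1) +
        pQ z 1 * Xi NB aH pC Vstar z x y) := by
  rw [VstarA_eq_expectedNextValue, VstarA_eq_expectedNextValue,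
    Xi_eq_expectedNextValue_sub, Xi_eq_expectedNextValue_sub, Nat.sub_add_cancel hy,
    Nat.sub_zero]
  push_cast
  ring

end BellmanAlgebra

theorem threshold_necessary_inequalities_general {NH NC : ℕ} (NB : ℕ)
    (aH : Fin NH → Fin NH → ℝ) (pC : Fin NC → Fin NC → ℝ)
    (pQ : Fin NH → ℕ → ℝ) (r : Fin NC → ℝ) (lam : ℝ)
    (Vstar : Fin NH → Fin NC → ℕ → ℝ)
    (κ : Fin NH → Fin NC → ℕ)
    (hthreshOff : ∀ (z : Fin NH) (x : Fin NC) (y : ℕ), 1 ≤ y → y ≤ κ z x →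
      VstarA NB aH pC pQ r lam Vstar 1 z x y ≤ VstarA NB aH pC pQ r lam Vstar 0 z x y)
    (hthreshOn : ∀ (z : Fin NH) (x : Fin NC) (y : ℕ), κ z x + 1 ≤ y → y ≤ NB - 1 →
      VstarA NB aH pC pQ r lam Vstar 0 z x y ≤ VstarA NB aH pC pQ r lam Vstar 1 z x y)
    (z : Fin NH) (x : Fin NC) (hκ1 : 1 ≤ κ z x) (hκ2 : κ z x ≤ NB - 2) :
    r x ≤ lam * (pQ z 0 * Xi NB aH pC Vstar z x (κ z x - 1) +
        pQ z 1 * Xi NB aH pC Vstar z x (κ z x)) ∧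
      lam * (pQ z 0 * Xi NB aH pC Vstar z x (κ z x) +
        pQ z 1 * Xi NB aH pC Vstar z x (κ z x + 1)) ≤ r x := by
  have idle := hthreshOff z x (κ z x) hκ1 le_rfl
  have transmit := hthreshOn z x (κ z x + 1) le_rfl (by omega)
  have gapIdle := VstarA_one_sub_VstarA_zero NB aH pC Vstar pQ r lam z x hκ1
  have gapTransmit :=
    VstarA_one_sub_VstarA_zero NB aH pC Vstar pQ r lam z x (Nat.le_add_left 1 (κ z x))
  rw [Nat.add_sub_cancel] at gapTransmit
  constructor <;> linarith

/-- Theorem 3, key inequalities: if `κ` is an optimal threshold policy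
for the Bellman fixed point `V*`, then for every `(z,x)` with `1 ≤ κ(z,x) ≤ N_B−2`,
`r(x) ≤ λ·( pQ(z,0)·Ξ(z,x,κ−1) + pQ(z,1)·Ξ(z,x,κ) )` and
`r(x) ≥ λ·( pQ(z,0)·Ξ(z,x,κ) + pQ(z,1)·Ξ(z,x,κ+1) )`. -/
theorem threshold_necessary_inequalities {NH NC : ℕ} (NB : ℕ)
    (hNH : 1 ≤ NH) (hNC : 1 ≤ NC) (hNB : 2 ≤ NB)
    (aH : Fin NH → Fin NH → ℝ) (pC : Fin NC → Fin NC → ℝ)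
    (pQ : Fin NH → ℕ → ℝ) (r : Fin NC → ℝ) (lam : ℝ)
    (haH : ∀ z j, 0 ≤ aH z j) (haHsum : ∀ z, ∑ j, aH z j = 1)
    (hpC : ∀ x l, 0 ≤ pC x l) (hpCsum : ∀ x, ∑ l, pC x l = 1)
    (hpQ0 : ∀ z, 0 ≤ pQ z 0) (hpQ1 : ∀ z, 0 ≤ pQ z 1)
    (hpQsum : ∀ z, pQ z 0 + pQ z 1 = 1) (hpQhi : ∀ z q, 2 ≤ q → pQ z q = 0)
    (hr : ∀ x, 0 ≤ r x) (hlam0 : 0 ≤ lam) (hlam1 : lam ≤ 1)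
    (Vstar : Fin NH → Fin NC → ℕ → ℝ)
    (hfix : ∀ (z : Fin NH) (x : Fin NC) (y : ℕ), y ≤ NB - 1 →
      Vstar z x y = (Finset.range (min y 1 + 1)).sup' Finset.nonempty_range_add_one
        (fun a => VstarA NB aH pC pQ r lam Vstar a z x y))
    (κ : Fin NH → Fin NC → ℕ) (hκle : ∀ z x, κ z x ≤ NB - 1)
    (hthreshOff : ∀ (z : Fin NH) (x : Fin NC) (y : ℕ), 1 ≤ y → y ≤ κ z x →
      VstarA NB aH pC pQ r lam Vstar 1 z x y ≤ VstarA NB aH pC pQ r lam Vstar 0 z x y)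
    (hthreshOn : ∀ (z : Fin NH) (x : Fin NC) (y : ℕ), κ z x + 1 ≤ y → y ≤ NB - 1 →
      VstarA NB aH pC pQ r lam Vstar 0 z x y ≤ VstarA NB aH pC pQ r lam Vstar 1 z x y)
    (z : Fin NH) (x : Fin NC) (hκ1 : 1 ≤ κ z x) (hκ2 : κ z x ≤ NB - 2) :
    r x ≤ lam * (pQ z 0 * Xi NB aH pC Vstar z x (κ z x - 1) +
        pQ z 1 * Xi NB aH pC Vstar z x (κ z x)) ∧
      lam * (pQ z 0 * Xi NB aH pC Vstar z x (κ z x) +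
        pQ z 1 * Xi NB aH pC Vstar z x (κ z x + 1)) ≤ r x :=
  threshold_necessary_inequalities_general NB aH pC pQ r lam Vstar κ hthreshOff hthreshOn z x hκ1
    hκ2
end

section
/- Suppose κ is an optimal threshold policy for the Bellman fixed point V* (i.e. for every (z,x): V*^1(z,x,y) ≤ V*^0(z,x,y) for all 1 ≤ y ≤ κ(z,x) and V*^1(z,x,y) ≥ V*^0(z,x,y) for all κ(z,x)+1 ≤ y ≤ N_B−1), and that λ > 0. Fix a solar state z and channel state x with 1 ≤ κ(z,x) ≤ N_B−2, and assume the strict monotonicity Ξ(z,x,κ(z,x)−1) > Ξ(z,x,κ(z,x)) and Ξ(z,x,κ(z,x)) > Ξ(z,x,κ(z,x)+1). Then the energy-deficiency probability necessarily satisfies φ(z,x,0) ≤ pQ(z,0) ≤ φ(z,x,1), where φ(z,x,n) = ( r(x)/λ − Ξ(z,x,κ(z,x)+n) ) / ( Ξ(z,x,κ(z,x)+n−1) − Ξ(z,x,κ(z,x)+n) ) for n ∈ {0,1}. -/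
/-
At battery level `y ≥ 1`, the gap between idling and transmitting is
`V*^0 − V*^1 = λ (pQ(z,0) Ξ(z,x,y−1) + pQ(z,1) Ξ(z,x,y)) − r(x)`.
The threshold conditions at `y = κ` (idling is optimal) and `y = κ + 1` (transmitting is
optimal) therefore trap `r(x)/λ` between two convex combinations of consecutive values of `Ξ`
with weights `pQ(z,0)` and `pQ(z,1) = 1 − pQ(z,0)`; solving these two linear inequalities for
`pQ(z,0)`, with the positive denominators given by the strict decrease of `Ξ`, gives the bounds.
-/

open Finset

noncomputable def expectedValue {NH NC : ℕ} (NB : ℕ) (aH : Fin NH → Fin NH → ℝ)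
    (pC : Fin NC → Fin NC → ℝ) (Vstar : Fin NH → Fin NC → ℕ → ℝ)
    (z : Fin NH) (x : Fin NC) (n : ℕ) : ℝ :=
  ∑ j, ∑ l, aH z j * pC x l * Vstar j l (min (NB - 1) n)

section

variable {NH NC : ℕ} (NB : ℕ) (aH : Fin NH → Fin NH → ℝ) (pC : Fin NC → Fin NC → ℝ)
  (pQ : Fin NH → ℕ → ℝ) (r : Fin NC → ℝ) (lam : ℝ) (Vstar : Fin NH → Fin NC → ℕ → ℝ)
  (z : Fin NH) (x : Fin NC)

theorem VstarA_eq_expectedValue (a y : ℕ) :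
    VstarA NB aH pC pQ r lam Vstar a z x y = a * r x + lam *
      (pQ z 0 * expectedValue NB aH pC Vstar z x (y - a) +
        pQ z 1 * expectedValue NB aH pC Vstar z x (y - a + 1)) := by
  simp only [VstarA, expectedValue, sum_range_succ, sum_range_zero, zero_add, add_zero,
    mul_sum, ← sum_add_distrib]
  exact congrArg _ (sum_congr rfl fun j _ => sum_congr rfl fun l _ => by ring)

theorem Xi_eq_expectedValue_sub (y : ℕ) :
    Xi NB aH pC Vstar z x y =
      expectedValue NB aH pC Vstar z x (y + 1) - expectedValue NB aH pC Vstar z x y := by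
  simp only [Xi, expectedValue, mul_sub, sum_sub_distrib]

theorem VstarA_zero_sub_VstarA_one {y : ℕ} (hy : 1 ≤ y) :
    VstarA NB aH pC pQ r lam Vstar 0 z x y - VstarA NB aH pC pQ r lam Vstar 1 z x y =
      lam * (pQ z 0 * Xi NB aH pC Vstar z x (y - 1) + pQ z 1 * Xi NB aH pC Vstar z x y) -
        r x := by
  simp only [VstarA_eq_expectedValue, Xi_eq_expectedValue_sub, Nat.sub_zero,
    Nat.sub_add_cancel hy]
  push_cast
  ring

end

theorem div_sub_le_iff_le_mul_add {lam p q r A B : ℝ} (hlam : 0 < lam) (hBA : B < A)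
    (hpq : p + q = 1) :
    (r / lam - B) / (A - B) ≤ p ↔ r ≤ lam * (p * A + q * B) := by
  rw [div_le_iff₀ (sub_pos.2 hBA), sub_le_iff_le_add, div_le_iff₀' hlam]
  rw [show p * (A - B) + B = p * A + q * B by linear_combination (-B) * hpq]

theorem le_div_sub_iff_mul_add_le {lam p q r B C : ℝ} (hlam : 0 < lam) (hCB : C < B)
    (hpq : p + q = 1) :
    p ≤ (r / lam - C) / (B - C) ↔ lam * (p * B + q * C) ≤ r := by
  rw [le_div_iff₀ (sub_pos.2 hCB), le_sub_iff_add_le, le_div_iff₀' hlam]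
  rw [show p * (B - C) + C = p * B + q * C by linear_combination (-C) * hpq]

theorem energy_deficiency_condition_general {NH NC : ℕ} (NB : ℕ)
    (aH : Fin NH → Fin NH → ℝ) (pC : Fin NC → Fin NC → ℝ)
    (pQ : Fin NH → ℕ → ℝ) (r : Fin NC → ℝ) (lam : ℝ)
    (hpQsum : ∀ z, pQ z 0 + pQ z 1 = 1)
    (Vstar : Fin NH → Fin NC → ℕ → ℝ)
    (κ : Fin NH → Fin NC → ℕ)
    (hthreshOff : ∀ (z : Fin NH) (x : Fin NC) (y : ℕ), 1 ≤ y → y ≤ κ z x →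
      VstarA NB aH pC pQ r lam Vstar 1 z x y ≤ VstarA NB aH pC pQ r lam Vstar 0 z x y)
    (hthreshOn : ∀ (z : Fin NH) (x : Fin NC) (y : ℕ), κ z x + 1 ≤ y → y ≤ NB - 1 →
      VstarA NB aH pC pQ r lam Vstar 0 z x y ≤ VstarA NB aH pC pQ r lam Vstar 1 z x y)
    (hlampos : 0 < lam)
    (z : Fin NH) (x : Fin NC) (hκ1 : 1 ≤ κ z x) (hκ2 : κ z x ≤ NB - 2)
    (hXi1 : Xi NB aH pC Vstar z x (κ z x) < Xi NB aH pC Vstar z x (κ z x - 1))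
    (hXi2 : Xi NB aH pC Vstar z x (κ z x + 1) < Xi NB aH pC Vstar z x (κ z x)) :
    (r x / lam - Xi NB aH pC Vstar z x (κ z x)) /
        (Xi NB aH pC Vstar z x (κ z x - 1) - Xi NB aH pC Vstar z x (κ z x)) ≤ pQ z 0 ∧
      pQ z 0 ≤ (r x / lam - Xi NB aH pC Vstar z x (κ z x + 1)) /
        (Xi NB aH pC Vstar z x (κ z x) - Xi NB aH pC Vstar z x (κ z x + 1)) := by
  have hOff := hthreshOff z x (κ z x) hκ1 le_rfl
  have hOn := hthreshOn z x (κ z x + 1) le_rfl (by omega)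
  rw [← sub_nonneg, VstarA_zero_sub_VstarA_one NB aH pC pQ r lam Vstar z x hκ1,
    sub_nonneg] at hOff
  rw [← sub_nonpos, VstarA_zero_sub_VstarA_one NB aH pC pQ r lam Vstar z x (by omega),
    Nat.add_sub_cancel, sub_nonpos] at hOn
  exact ⟨(div_sub_le_iff_le_mul_add hlampos hXi1 (hpQsum z)).2 hOff,
    (le_div_sub_iff_mul_add_le hlampos hXi2 (hpQsum z)).2 hOn⟩

/-- Theorem 3, energy-deficiency condition: if `κ` is an optimal
threshold policy for the Bellman fixed point `V*`, `λ > 0`, and `Ξ` is strictly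
decreasing around the threshold, then the energy-deficiency probability satisfies
`φ(z,x,0) ≤ pQ(z,0) ≤ φ(z,x,1)`. -/
theorem energy_deficiency_condition {NH NC : ℕ} (NB : ℕ)
    (hNH : 1 ≤ NH) (hNC : 1 ≤ NC) (hNB : 2 ≤ NB)
    (aH : Fin NH → Fin NH → ℝ) (pC : Fin NC → Fin NC → ℝ)
    (pQ : Fin NH → ℕ → ℝ) (r : Fin NC → ℝ) (lam : ℝ)
    (haH : ∀ z j, 0 ≤ aH z j) (haHsum : ∀ z, ∑ j, aH z j = 1)
    (hpC : ∀ x l, 0 ≤ pC x l) (hpCsum : ∀ x, ∑ l, pC x l = 1)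
    (hpQ0 : ∀ z, 0 ≤ pQ z 0) (hpQ1 : ∀ z, 0 ≤ pQ z 1)
    (hpQsum : ∀ z, pQ z 0 + pQ z 1 = 1) (hpQhi : ∀ z q, 2 ≤ q → pQ z q = 0)
    (hr : ∀ x, 0 ≤ r x) (hlam0 : 0 ≤ lam) (hlam1 : lam ≤ 1)
    (Vstar : Fin NH → Fin NC → ℕ → ℝ)
    (hfix : ∀ (z : Fin NH) (x : Fin NC) (y : ℕ), y ≤ NB - 1 →
      Vstar z x y = (Finset.range (min y 1 + 1)).sup' Finset.nonempty_range_add_one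
        (fun a => VstarA NB aH pC pQ r lam Vstar a z x y))
    (κ : Fin NH → Fin NC → ℕ) (hκle : ∀ z x, κ z x ≤ NB - 1)
    (hthreshOff : ∀ (z : Fin NH) (x : Fin NC) (y : ℕ), 1 ≤ y → y ≤ κ z x →
      VstarA NB aH pC pQ r lam Vstar 1 z x y ≤ VstarA NB aH pC pQ r lam Vstar 0 z x y)
    (hthreshOn : ∀ (z : Fin NH) (x : Fin NC) (y : ℕ), κ z x + 1 ≤ y → y ≤ NB - 1 →
      VstarA NB aH pC pQ r lam Vstar 0 z x y ≤ VstarA NB aH pC pQ r lam Vstar 1 z x y)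
    (hlampos : 0 < lam)
    (z : Fin NH) (x : Fin NC) (hκ1 : 1 ≤ κ z x) (hκ2 : κ z x ≤ NB - 2)
    (hXi1 : Xi NB aH pC Vstar z x (κ z x) < Xi NB aH pC Vstar z x (κ z x - 1))
    (hXi2 : Xi NB aH pC Vstar z x (κ z x + 1) < Xi NB aH pC Vstar z x (κ z x)) :
    (r x / lam - Xi NB aH pC Vstar z x (κ z x)) /
        (Xi NB aH pC Vstar z x (κ z x - 1) - Xi NB aH pC Vstar z x (κ z x)) ≤ pQ z 0 ∧
      pQ z 0 ≤ (r x / lam - Xi NB aH pC Vstar z x (κ z x + 1)) /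
        (Xi NB aH pC Vstar z x (κ z x) - Xi NB aH pC Vstar z x (κ z x + 1)) :=
  energy_deficiency_condition_general NB aH pC pQ r lam hpQsum Vstar κ hthreshOff hthreshOn hlampos
    z x hκ1 hκ2 hXi1 hXi2
end
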